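/- arXiv:1604.01853 — 8 statements merged into one kernel-verified Lean document; each statement's English description precedes it below -/
import Mathlib

section
/- Let f and g be integrable functions on [a,b] with f decreasing on [a,b] and 0 ≤ g(t) ≤ 1 for all t ∈ [a,b], and set λ = ∫_a^b g(t) dt. Then ∫_{b-λ}^b f(t) dt ≤ ∫_a^b f(t) g(t) dt ≤ ∫_a^{a+λ} f(t) dt. -/
/-!
For any `c ∈ [a, b]`, split `∫ f g` at `c`: on `[a, c]` one has `(f t - f c) (g t - 1) ≤ 0`,
i.e. `f t g t ≤ f t + f c (g t - 1)`, and on `[c, b]` one has `f t g t ≤ f c g t`. Hence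
`∫ f g ≤ ∫_a^c f + f c (λ - (c - a))`, and `c = a + λ` kills the correction term. The lower
bound is the upper bound applied to `1 - g`, whose integral is `b - a - λ`.
-/

open MeasureTheory Set

section Steffensen

variable {a b c : ℝ} {f g : ℝ → ℝ}

theorem IntervalIntegrable.mul_of_mem_Icc_zero_one (hab : a ≤ b)
    (hf : IntervalIntegrable f volume a b) (hg : IntervalIntegrable g volume a b)
    (hg01 : ∀ t ∈ Icc a b, g t ∈ Icc 0 1) :
    IntervalIntegrable (fun t => f t * g t) volume a b := by
  rw [intervalIntegrable_iff_integrableOn_Ioc_of_le hab] at hf hg ⊢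
  refine hf.mul_bdd (c := 1) hg.aestronglyMeasurable
    (ae_restrict_of_forall_mem measurableSet_Ioc fun t ht => ?_)
  obtain ⟨hg0, hg1⟩ := hg01 t (Ioc_subset_Icc_self ht)
  exact abs_le.2 ⟨by linarith, hg1⟩

theorem intervalIntegral.integral_mem_Icc_of_mem_Icc_zero_one (hab : a ≤ b)
    (hg : IntervalIntegrable g volume a b) (hg01 : ∀ t ∈ Icc a b, g t ∈ Icc 0 1) :
    (∫ t in a..b, g t) ∈ Icc 0 (b - a) := by
  constructor
  · exact intervalIntegral.integral_nonneg hab fun t ht => (hg01 t ht).1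
  · simpa using intervalIntegral.integral_mono_on hab hg intervalIntegrable_const
      fun t ht => (hg01 t ht).2

namespace intervalIntegral

variable (hf : IntervalIntegrable f volume a b) (hg : IntervalIntegrable g volume a b)
  (hf_anti : AntitoneOn f (Icc a b)) (hg01 : ∀ t ∈ Icc a b, g t ∈ Icc 0 1)
include hf hg hf_anti hg01

theorem integral_mul_le_integral_add_of_antitoneOn (hac : a ≤ c) (hcb : c ≤ b) :
    ∫ t in a..b, f t * g t ≤ (∫ t in a..c, f t) + f c * ((∫ t in a..b, g t) - (c - a)) := by
  have hc : c ∈ Icc a b := ⟨hac, hcb⟩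
  have on_left {F : ℝ → ℝ} (hF : IntervalIntegrable F volume a b) :
      IntervalIntegrable F volume a c :=
    hF.mono_set (uIcc_subset_uIcc left_mem_uIcc (Icc_subset_uIcc hc))
  have on_right {F : ℝ → ℝ} (hF : IntervalIntegrable F volume a b) :
      IntervalIntegrable F volume c b :=
    hF.mono_set (uIcc_subset_uIcc (Icc_subset_uIcc hc) right_mem_uIcc)
  have hfg := hf.mul_of_mem_Icc_zero_one (hac.trans hcb) hg hg01
  have hg_sub_one : IntervalIntegrable (fun t => f c * (g t - 1)) volume a c :=
    ((on_left hg).sub intervalIntegrable_const).const_mul _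
  have below : ∫ t in a..c, f t * g t ≤ ∫ t in a..c, (f t + f c * (g t - 1)) := by
    refine integral_mono_on hac (on_left hfg) ((on_left hf).add hg_sub_one) fun t ht => ?_
    have ht' : t ∈ Icc a b := ⟨ht.1, ht.2.trans hcb⟩
    nlinarith [hf_anti ht' hc ht.2, (hg01 t ht').2]
  have above : ∫ t in c..b, f t * g t ≤ ∫ t in c..b, f c * g t :=
    integral_mono_on hcb (on_right hfg) ((on_right hg).const_mul _) fun t ht => by
      have ht' : t ∈ Icc a b := ⟨hac.trans ht.1, ht.2⟩
      exact mul_le_mul_of_nonneg_right (hf_anti hc ht' ht.1) (hg01 t ht').1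
  rw [integral_add (on_left hf) hg_sub_one, integral_const_mul,
    integral_sub (on_left hg) intervalIntegrable_const, integral_const, smul_eq_mul,
    mul_one] at below
  rw [integral_const_mul] at above
  rw [← integral_add_adjacent_intervals (on_left hfg) (on_right hfg),
    ← integral_add_adjacent_intervals (on_left hg) (on_right hg)]
  linarith

theorem integral_mul_le_integral_of_antitoneOn (hab : a ≤ b) :
    ∫ t in a..b, f t * g t ≤ ∫ t in a..(a + ∫ t in a..b, g t), f t := by
  have hlam := integral_mem_Icc_of_mem_Icc_zero_one hab hg hg01
  simpa using integral_mul_le_integral_add_of_antitoneOn hf hg hf_anti hg01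
    (c := a + ∫ t in a..b, g t) (by linarith [hlam.1]) (by linarith [hlam.2])

theorem integral_le_integral_mul_of_antitoneOn (hab : a ≤ b) :
    ∫ t in (b - ∫ t in a..b, g t)..b, f t ≤ ∫ t in a..b, f t * g t := by
  have h := integral_mul_le_integral_of_antitoneOn (g := fun t => 1 - g t) hf
    (intervalIntegrable_const.sub hg) hf_anti
    (fun t ht => Icc.mem_iff_one_sub_mem.mp (hg01 t ht)) hab
  have hlam := integral_mem_Icc_of_mem_Icc_zero_one hab hg hg01
  have hd : b - ∫ t in a..b, g t ∈ uIcc a b :=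
    Icc_subset_uIcc ⟨by linarith [hlam.2], by linarith [hlam.1]⟩
  simp only [mul_sub, mul_one] at h
  rw [integral_sub hf (hf.mul_of_mem_Icc_zero_one hab hg hg01),
    integral_sub intervalIntegrable_const hg, integral_const, smul_eq_mul, mul_one,
    show a + (b - a - ∫ t in a..b, g t) = b - ∫ t in a..b, g t by ring] at h
  have hsplit := integral_add_adjacent_intervals (hf.mono_set (uIcc_subset_uIcc left_mem_uIcc hd))
    (hf.mono_set (uIcc_subset_uIcc hd right_mem_uIcc))
  linarith

end intervalIntegral

end Steffensen

theorem steffensen_inequality (a b : ℝ) (hab : a < b) (f g : ℝ → ℝ)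
    (hf : IntervalIntegrable f volume a b)
    (hg : IntervalIntegrable g volume a b)
    (hf_dec : AntitoneOn f (Set.Icc a b))
    (hg01 : ∀ t ∈ Set.Icc a b, 0 ≤ g t ∧ g t ≤ 1)
    (lam : ℝ) (hlam : lam = ∫ t in a..b, g t) :
    (∫ t in (b - lam)..b, f t) ≤ (∫ t in a..b, f t * g t) ∧
      (∫ t in a..b, f t * g t) ≤ ∫ t in a..(a + lam), f t := by
  subst hlam
  exact ⟨intervalIntegral.integral_le_integral_mul_of_antitoneOn hf hg hf_dec hg01 hab.le,
    intervalIntegral.integral_mul_le_integral_of_antitoneOn hf hg hf_dec hg01 hab.le⟩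
end

section
/- Let f be decreasing and nonnegative on (0,∞), let g be measurable on (0,∞) with 0 ≤ g(t) ≤ A for all t, where A > 0, and assume that ∫_0^∞ g(t) dt is finite and that f·g is integrable on (0,∞). Then ∫_0^∞ f(t) g(t) dt ≤ A ∫_0^λ f(t) dt, where λ = (1/A) ∫_0^∞ g(t) dt. -/
/-!
Steffensen's argument: with `λ` chosen so that `A λ = ∫ g`, the function `A · 𝟙_(0,λ]` carries the
same mass as `g` but pushes it as far left as the constraint `g ≤ A` allows, where the decreasing `f`
is largest. Concretely, for `t > 0`
`f t g t ≤ f λ g t + 𝟙_(0,λ](t) A (f t - f λ)`,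
since on `(0,λ]` this is `(f t - f λ)(g t - A) ≤ 0` and on `(λ,∞)` it is `f t ≤ f λ`;
integrating, the `f λ` terms cancel. When `λ = 0`, `g` vanishes a.e. and both sides are `0`.
-/

open MeasureTheory Set

lemma setIntegral_mul_eq_zero_of_setIntegral_eq_zero {α : Type*} [MeasurableSpace α]
    {μ : Measure α} {f g : α → ℝ} {s : Set α} (hs : MeasurableSet s)
    (hg0 : ∀ t ∈ s, 0 ≤ g t) (hg_int : IntegrableOn g s μ) (hg : ∫ t in s, g t ∂μ = 0) :
    ∫ t in s, f t * g t ∂μ = 0 := by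
  have hg_ae : g =ᵐ[μ.restrict s] 0 :=
    (integral_eq_zero_iff_of_nonneg_ae ((ae_restrict_iff' hs).2 (.of_forall hg0)) hg_int).1 hg
  rw [integral_congr_ae (g := 0) (by filter_upwards [hg_ae] with t ht; simp [ht])]
  simp

section Steffensen

variable {f g : ℝ → ℝ} {A a c M : ℝ}

lemma mul_le_mul_add_indicator_Ioc (hMf : ∀ t ∈ Ioc a c, M ≤ f t) (hfM : ∀ t ∈ Ioi c, f t ≤ M)
    (hg : ∀ t ∈ Ioi a, 0 ≤ g t ∧ g t ≤ A) {t : ℝ} (ht : t ∈ Ioi a) :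
    f t * g t ≤ M * g t + (Ioc a c).indicator (fun t => A * (f t - M)) t := by
  obtain ⟨hg0, hgA⟩ := hg t ht
  by_cases htc : t ≤ c
  · have hMt := hMf t ⟨ht, htc⟩
    rw [indicator_of_mem (show t ∈ Ioc a c from ⟨ht, htc⟩)]
    nlinarith
  · have hfMt := hfM t (not_le.1 htc)
    rw [indicator_of_notMem fun h => htc h.2]
    nlinarith

lemma steffensen_setIntegral_Ioi_le (hac : a ≤ c) (hMf : ∀ t ∈ Ioc a c, M ≤ f t)
    (hfM : ∀ t ∈ Ioi c, f t ≤ M) (hg : ∀ t ∈ Ioi a, 0 ≤ g t ∧ g t ≤ A)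
    (hg_int : IntegrableOn g (Ioi a)) (hfg_int : IntegrableOn (fun t => f t * g t) (Ioi a))
    (hf_int : IntegrableOn f (Ioc a c)) :
    ∫ t in Ioi a, f t * g t ≤
      M * (∫ t in Ioi a, g t) + A * ((∫ t in Ioc a c, f t) - M * (c - a)) := by
  have hsub : Ioc a c ⊆ Ioi a := Ioc_subset_Ioi_self
  have hbump_int : IntegrableOn (fun t => A * (f t - M)) (Ioc a c) :=
    (hf_int.sub (integrableOn_const (by simp))).const_mul A
  have hbump : ∫ t in Ioi a, (Ioc a c).indicator (fun t => A * (f t - M)) t =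
      A * ((∫ t in Ioc a c, f t) - M * (c - a)) := by
    rw [setIntegral_indicator measurableSet_Ioc, inter_eq_right.2 hsub, integral_const_mul,
      integral_sub hf_int (integrableOn_const (by simp)), setIntegral_const, smul_eq_mul,
      measureReal_def, Real.volume_Ioc, ENNReal.toReal_ofReal (sub_nonneg.2 hac), mul_comm M]
  have hind_int : IntegrableOn ((Ioc a c).indicator fun t => A * (f t - M)) (Ioi a) :=
    (hbump_int.integrable_indicator measurableSet_Ioc).integrableOn
  calc ∫ t in Ioi a, f t * g t
      ≤ ∫ t in Ioi a, (M * g t + (Ioc a c).indicator (fun t => A * (f t - M)) t) :=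
        setIntegral_mono_on hfg_int ((hg_int.const_mul M).add hind_int) measurableSet_Ioi
          fun t ht => mul_le_mul_add_indicator_Ioc hMf hfM hg ht
    _ = M * (∫ t in Ioi a, g t) + A * ((∫ t in Ioc a c, f t) - M * (c - a)) := by
        rw [integral_add (hg_int.const_mul M) hind_int, integral_const_mul, hbump]

end Steffensen

theorem apery_steffensen_general (A : ℝ) (hA : 0 < A) (f g : ℝ → ℝ)
    (hf_anti : AntitoneOn f (Set.Ioi 0))
    (hg0A : ∀ t ∈ Set.Ioi (0 : ℝ), 0 ≤ g t ∧ g t ≤ A)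
    (hg_int : IntegrableOn g (Set.Ioi 0))
    (hfg_int : IntegrableOn (fun t => f t * g t) (Set.Ioi 0))
    (lam : ℝ) (hlam : lam = (1 / A) * ∫ t in Set.Ioi (0 : ℝ), g t)
    (hf_int : IntervalIntegrable f volume 0 lam) :
    (∫ t in Set.Ioi (0 : ℝ), f t * g t) ≤ A * ∫ t in (0 : ℝ)..lam, f t := by
  have hg_mass : ∫ t in Ioi (0 : ℝ), g t = A * lam := by
    rw [hlam]; field_simp
  have hlam0 : 0 ≤ lam := by
    rw [hlam]
    exact mul_nonneg (by positivity) (setIntegral_nonneg measurableSet_Ioi fun t ht => (hg0A t ht).1)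
  rcases hlam0.eq_or_lt with rfl | hlam_pos
  · rw [setIntegral_mul_eq_zero_of_setIntegral_eq_zero measurableSet_Ioi
      (fun t ht => (hg0A t ht).1) hg_int (by simpa using hg_mass)]
    simp
  · have key := steffensen_setIntegral_Ioi_le hlam0
      (fun t ht => hf_anti ht.1 hlam_pos ht.2)
      (fun t ht => hf_anti hlam_pos (lt_trans hlam_pos ht) ht.le) hg0A hg_int hfg_int hf_int.1
    rw [intervalIntegral.integral_of_le hlam0]
    linear_combination key + f lam * hg_mass

theorem apery_steffensen (A : ℝ) (hA : 0 < A) (f g : ℝ → ℝ)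
    (hf_anti : AntitoneOn f (Set.Ioi 0))
    (hf_nonneg : ∀ t ∈ Set.Ioi (0 : ℝ), 0 ≤ f t)
    (hg_meas : Measurable g)
    (hg0A : ∀ t ∈ Set.Ioi (0 : ℝ), 0 ≤ g t ∧ g t ≤ A)
    (hg_int : IntegrableOn g (Set.Ioi 0))
    (hfg_int : IntegrableOn (fun t => f t * g t) (Set.Ioi 0))
    (lam : ℝ) (hlam : lam = (1 / A) * ∫ t in Set.Ioi (0 : ℝ), g t)
    (hf_int : IntervalIntegrable f volume 0 lam) :
    (∫ t in Set.Ioi (0 : ℝ), f t * g t) ≤ A * ∫ t in (0 : ℝ)..lam, f t :=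
  apery_steffensen_general A hA f g hf_anti hg0A hg_int hfg_int lam hlam hf_int
end

section
/- Let g : [a,b] → ℝ be integrable with 0 ≤ g(t) ≤ 1 for all t ∈ [a,b], let f : [a,b] → ℝ be absolutely continuous on [a,b] with derivative f', and set λ = ∫_a^b g(t) dt. Then ∫_a^{a+λ} f(t) dt − ∫_a^b f(t) g(t) dt = −∫_a^{a+λ} (∫_a^x (1 − g(t)) dt) f'(x) dx − ∫_{a+λ}^b (∫_x^b g(t) dt) f'(x) dx. -/
/-!
Write `f = f a + ∫ₐˣ f'`. Integrating by parts (for the absolutely continuous primitives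
`x ↦ ∫ₐˣ f'` and `x ↦ ∫ₓᵇ h`) turns `∫ₐᵇ f h` into `f a ∫ₐᵇ h + ∫ₐᵇ (∫ₓᵇ h) f'(x) dx`.
Applying this with `h = 1` on `[a, a + λ]` and with `h = g` on `[a, b]`, the terms in `f a`
cancel because both equal `λ f a`, and the remaining kernels combine by
`∫ₐˣ (1 - g) - ∫ₓᵇ g = x - (a + λ)`.
-/

open MeasureTheory Set

theorem IntervalIntegrable.ae_deriv_integral_eq {a b c : ℝ} {w : ℝ → ℝ}
    (hw : IntervalIntegrable w volume a b) (hc : c ∈ uIcc a b) :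
    ∀ᵐ x, x ∈ uIoc a b → deriv (fun x => ∫ t in c..x, w t) x = w x := by
  filter_upwards [hw.ae_hasDerivAt_integral] with x hx hxab
  exact (hx (uIoc_subset_uIcc hxab) c hc).deriv

theorem integral_primitive_mul_eq_integral_tail_mul {a b : ℝ} {u v : ℝ → ℝ}
    (hu : IntervalIntegrable u volume a b) (hv : IntervalIntegrable v volume a b) :
    ∫ x in a..b, (∫ t in a..x, v t) * u x = ∫ x in a..b, (∫ t in x..b, u t) * v x := by
  set P := fun x => ∫ t in a..x, v t
  set Q := fun x => ∫ t in b..x, u t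
  have hP := hv.absolutelyContinuousOnInterval_intervalIntegral left_mem_uIcc
  have hQ := hu.absolutelyContinuousOnInterval_intervalIntegral right_mem_uIcc
  have hPQ' : ∫ x in a..b, P x * deriv Q x = ∫ x in a..b, P x * u x :=
    intervalIntegral.integral_congr_ae <|
      (hu.ae_deriv_integral_eq right_mem_uIcc).mono fun x hx hxab => by rw [hx hxab]
  have hP'Q : ∫ x in a..b, deriv P x * Q x = ∫ x in a..b, v x * Q x :=
    intervalIntegral.integral_congr_ae <|
      (hv.ae_deriv_integral_eq left_mem_uIcc).mono fun x hx hxab => by rw [hx hxab]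
  have ibp := hP.integral_mul_deriv_eq_deriv_mul hQ
  rw [hPQ', hP'Q] at ibp
  simp only [P, Q, intervalIntegral.integral_same, mul_zero, zero_mul, sub_zero, zero_sub] at ibp
  rw [ibp, ← intervalIntegral.integral_neg]
  refine intervalIntegral.integral_congr fun x _ => ?_
  rw [intervalIntegral.integral_symm x b]
  ring

theorem integral_mul_eq_of_eq_add_primitive {a b : ℝ} {f f' h : ℝ → ℝ}
    (hf' : IntervalIntegrable f' volume a b) (hh : IntervalIntegrable h volume a b)
    (hf : ∀ x ∈ uIcc a b, f x = f a + ∫ t in a..x, f' t) :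
    ∫ x in a..b, f x * h x
      = f a * (∫ x in a..b, h x) + ∫ x in a..b, (∫ t in x..b, h t) * f' x := by
  calc ∫ x in a..b, f x * h x
      = ∫ x in a..b, (f a * h x + (∫ t in a..x, f' t) * h x) :=
        intervalIntegral.integral_congr fun x hx => by rw [hf x hx, add_mul]
    _ = f a * (∫ x in a..b, h x) + ∫ x in a..b, (∫ t in a..x, f' t) * h x := by
        rw [intervalIntegral.integral_add (hh.const_mul _)
            (hh.continuousOn_mul (intervalIntegral.continuousOn_primitive_interval' hf'
              left_mem_uIcc)),
          intervalIntegral.integral_const_mul]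
    _ = _ := by rw [integral_primitive_mul_eq_integral_tail_mul hh hf']

theorem add_integral_mem_uIcc {a b : ℝ} (hab : a ≤ b) {g : ℝ → ℝ}
    (hg : IntervalIntegrable g volume a b) (hg01 : ∀ t ∈ Icc a b, 0 ≤ g t ∧ g t ≤ 1) :
    a + ∫ t in a..b, g t ∈ uIcc a b := by
  have h0 : 0 ≤ ∫ t in a..b, g t :=
    intervalIntegral.integral_nonneg hab fun t ht => (hg01 t ht).1
  have h1 : ∫ t in a..b, g t ≤ b - a := by
    simpa using intervalIntegral.integral_mono_on hab hg intervalIntegrable_const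
      fun t ht => (hg01 t ht).2
  rw [uIcc_of_le hab]
  constructor <;> linarith

theorem integral_one_sub_sub_integral_tail {a b x : ℝ} {g : ℝ → ℝ}
    (hg : IntervalIntegrable g volume a b) (hx : x ∈ uIcc a b) :
    (∫ t in a..x, (1 - g t)) - ∫ t in x..b, g t = x - (a + ∫ t in a..b, g t) := by
  have hgax : IntervalIntegrable g volume a x := hg.mono_set (uIcc_subset_uIcc_left hx)
  have hgxb : IntervalIntegrable g volume x b := hg.mono_set (uIcc_subset_uIcc_right hx)
  rw [← intervalIntegral.integral_add_adjacent_intervals hgax hgxb,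
    intervalIntegral.integral_sub intervalIntegrable_const hgax, intervalIntegral.integral_const,
    smul_eq_mul, mul_one]
  ring

theorem steffensen_identity_one (a b : ℝ) (hab : a < b) (f f' g : ℝ → ℝ)
    (hg : IntervalIntegrable g volume a b)
    (hg01 : ∀ t ∈ Set.Icc a b, 0 ≤ g t ∧ g t ≤ 1)
    (hf' : IntervalIntegrable f' volume a b)
    (hAC : ∀ x ∈ Set.Icc a b, f x = f a + ∫ t in a..x, f' t)
    (lam : ℝ) (hlam : lam = ∫ t in a..b, g t) :
    (∫ t in a..(a + lam), f t) - (∫ t in a..b, f t * g t)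
      = -(∫ x in a..(a + lam), (∫ t in a..x, (1 - g t)) * f' x)
          - ∫ x in (a + lam)..b, (∫ t in x..b, g t) * f' x := by
  rw [← uIcc_of_le hab.le] at hAC
  have hc : a + lam ∈ uIcc a b := hlam ▸ add_integral_mem_uIcc hab.le hg hg01
  set c := a + lam
  have hac := uIcc_subset_uIcc_left hc
  have hf'ac := hf'.mono_set hac
  have hIc : ∫ t in a..c, f t = f a * (c - a) + ∫ x in a..c, (c - x) * f' x := by
    simpa using integral_mul_eq_of_eq_add_primitive hf'ac intervalIntegrable_const
      (fun x hx => hAC x (hac hx)) (h := 1)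
  have hIb : ∫ t in a..b, f t * g t = f a * lam + ∫ x in a..b, (∫ t in x..b, g t) * f' x := by
    rw [integral_mul_eq_of_eq_add_primitive hf' hg hAC, hlam]
  have hT := hf'.continuousOn_mul
    (intervalIntegral.continuousOn_primitive_interval_left ((intervalIntegrable_iff').1 hg))
  have hK : ∫ x in a..c, (∫ t in a..x, (1 - g t)) * f' x
      = (∫ x in a..c, (∫ t in x..b, g t) * f' x) - ∫ x in a..c, (c - x) * f' x := by
    rw [← intervalIntegral.integral_sub (hT.mono_set hac) (hf'ac.continuousOn_mul (by fun_prop))]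
    refine intervalIntegral.integral_congr fun x hx => ?_
    linear_combination f' x * (integral_one_sub_sub_integral_tail hg (hac hx) + hlam)
  rw [hIc, hIb, hK, ← intervalIntegral.integral_add_adjacent_intervals (hT.mono_set hac)
    (hT.mono_set (uIcc_subset_uIcc_right hc))]
  simp only [c]
  ring
end

section
/- Let f, g : [a,b] → ℝ with g integrable, 0 ≤ g(t) ≤ 1 for all t ∈ [a,b], f of bounded variation on [a,b], f integrable, and f·g integrable on [a,b]. Setting λ = ∫_a^b g(t) dt, one has |∫_a^{a+λ} f(t) dt − ∫_a^b f(t) g(t) dt| ≤ (∫_{a+λ}^b g(t) dt) · V_a^b(f) ≤ (b − a − λ) · V_a^b(f). -/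
/-!
With `c = a + λ`, the condition `∫_a^b g = c - a` says that the mass `1 - g` missing on `[a, c]`
equals the mass `g` carried by `[c, b]`. Hence, for the constant `k = f c`,
`∫_a^c f - ∫_a^b f g = ∫_a^c (f - f c)(1 - g) - ∫_c^b (f - f c) g`,
and on each of the two intervals `|f - f c|` is bounded by the variation of `f` there. Both
weights have total mass `∫_c^b g`, and the two variations add up to `V_a^b(f)`.
-/

open MeasureTheory Set

theorem BoundedVariationOn.toReal_eVariationOn_Icc_add_Icc {α E : Type*} [LinearOrder α]
    [PseudoEMetricSpace E] {f : α → E} {a b c : α} (hf : BoundedVariationOn f (Icc a c))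
    (hab : a ≤ b) (hbc : b ≤ c) :
    (eVariationOn f (Icc a b)).toReal + (eVariationOn f (Icc b c)).toReal =
      (eVariationOn f (Icc a c)).toReal := by
  have h := eVariationOn.Icc_add_Icc f (s := univ) hab hbc (mem_univ b)
  simp only [univ_inter] at h
  rw [← h, ENNReal.toReal_add (hf.mono (Icc_subset_Icc le_rfl hbc))
    (hf.mono (Icc_subset_Icc hab le_rfl))]

theorem intervalIntegral.integral_mem_Icc_of_mem_unitInterval {g : ℝ → ℝ} {a b : ℝ} (hab : a ≤ b)
    (hg : IntervalIntegrable g volume a b) (hg01 : ∀ t ∈ Icc a b, g t ∈ Icc (0 : ℝ) 1) :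
    ∫ t in a..b, g t ∈ Icc 0 (b - a) := by
  refine ⟨intervalIntegral.integral_nonneg hab fun t ht => (hg01 t ht).1, ?_⟩
  calc ∫ t in a..b, g t ≤ ∫ _ in a..b, (1 : ℝ) :=
        intervalIntegral.integral_mono_on hab hg intervalIntegrable_const fun t ht => (hg01 t ht).2
    _ = b - a := by simp

theorem BoundedVariationOn.abs_integral_sub_mul_le {f w : ℝ → ℝ} {a b x : ℝ} (hab : a ≤ b)
    (hf : BoundedVariationOn f (Icc a b)) (hx : x ∈ Icc a b)
    (hw : IntervalIntegrable w volume a b) (hw0 : ∀ t ∈ Icc a b, 0 ≤ w t) :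
    |∫ t in a..b, (f t - f x) * w t| ≤ (eVariationOn f (Icc a b)).toReal * ∫ t in a..b, w t := by
  rw [← Real.norm_eq_abs, ← intervalIntegral.integral_const_mul]
  refine intervalIntegral.norm_integral_le_of_norm_le hab (ae_of_all _ fun t ht => ?_)
    (hw.const_mul _)
  have ht' : t ∈ Icc a b := Ioc_subset_Icc_self ht
  rw [Real.norm_eq_abs, abs_mul, abs_of_nonneg (hw0 t ht'), ← Real.dist_eq]
  exact mul_le_mul_of_nonneg_right (hf.dist_le ht' hx) (hw0 t ht')

theorem intervalIntegral.integral_sub_integral_mul_eq {f g : ℝ → ℝ} {a b c : ℝ} (k : ℝ)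
    (hc : c ∈ uIcc a b) (hcg : ∫ t in a..b, g t = c - a)
    (hf : IntervalIntegrable f volume a b) (hg : IntervalIntegrable g volume a b)
    (hfg : IntervalIntegrable (fun t => f t * g t) volume a b) :
    (∫ t in a..c, f t) - ∫ t in a..b, f t * g t =
      (∫ t in a..c, (f t - k) * (1 - g t)) - ∫ t in c..b, (f t - k) * g t := by
  have hg₁ := hg.mono_set (uIcc_subset_uIcc_left hc)
  have hg₂ := hg.mono_set (uIcc_subset_uIcc_right hc)
  have hfg₁ := hfg.mono_set (uIcc_subset_uIcc_left hc)
  have hfg₂ := hfg.mono_set (uIcc_subset_uIcc_right hc)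
  have hf₁ := hf.mono_set (uIcc_subset_uIcc_left hc)
  have h₁ : ∫ t in a..c, (f t - k) * (1 - g t) =
      (∫ t in a..c, f t) - (∫ t in a..c, f t * g t) - (k * (c - a) - k * ∫ t in a..c, g t) := by
    have : (fun t => (f t - k) * (1 - g t)) = fun t => f t - f t * g t - (k - k * g t) := by
      ext; ring
    rw [this, intervalIntegral.integral_sub (hf₁.sub hfg₁)
        (intervalIntegrable_const.sub (hg₁.const_mul k)), intervalIntegral.integral_sub hf₁ hfg₁,
      intervalIntegral.integral_sub intervalIntegrable_const (hg₁.const_mul k),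
      intervalIntegral.integral_const_mul, intervalIntegral.integral_const, smul_eq_mul, mul_comm]
  have h₂ : ∫ t in c..b, (f t - k) * g t = (∫ t in c..b, f t * g t) - k * ∫ t in c..b, g t := by
    have : (fun t => (f t - k) * g t) = fun t => f t * g t - k * g t := by ext; ring
    rw [this, intervalIntegral.integral_sub hfg₂ (hg₂.const_mul k),
      intervalIntegral.integral_const_mul]
  rw [h₁, h₂, ← intervalIntegral.integral_add_adjacent_intervals hfg₁ hfg₂]
  linear_combination (-k) * (intervalIntegral.integral_add_adjacent_intervals hg₁ hg₂).trans hcg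

theorem BoundedVariationOn.abs_integral_sub_integral_mul_le {f g : ℝ → ℝ} {a b c : ℝ}
    (hf_bv : BoundedVariationOn f (Icc a b)) (hac : a ≤ c) (hcb : c ≤ b)
    (hcg : ∫ t in a..b, g t = c - a) (hg01 : ∀ t ∈ Icc a b, g t ∈ Icc (0 : ℝ) 1)
    (hf : IntervalIntegrable f volume a b) (hg : IntervalIntegrable g volume a b)
    (hfg : IntervalIntegrable (fun t => f t * g t) volume a b) :
    |(∫ t in a..c, f t) - ∫ t in a..b, f t * g t|
      ≤ (∫ t in c..b, g t) * (eVariationOn f (Icc a b)).toReal := by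
  have hc : c ∈ uIcc a b := Icc_subset_uIcc ⟨hac, hcb⟩
  have hg₁ := hg.mono_set (uIcc_subset_uIcc_left hc)
  have hg₂ := hg.mono_set (uIcc_subset_uIcc_right hc)
  have h_deficit : ∫ t in a..c, (1 - g t) = ∫ t in c..b, g t := by
    rw [intervalIntegral.integral_sub intervalIntegrable_const hg₁, intervalIntegral.integral_const,
      smul_eq_mul, mul_one, ← hcg, ← intervalIntegral.integral_add_adjacent_intervals hg₁ hg₂]
    ring
  have h_left := (hf_bv.mono (Icc_subset_Icc le_rfl hcb)).abs_integral_sub_mul_le hac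
    ⟨hac, le_rfl⟩ (intervalIntegrable_const.sub hg₁)
    fun t ht => sub_nonneg.2 (hg01 t ⟨ht.1, ht.2.trans hcb⟩).2
  have h_right := (hf_bv.mono (Icc_subset_Icc hac le_rfl)).abs_integral_sub_mul_le hcb
    ⟨le_rfl, hcb⟩ hg₂ fun t ht => (hg01 t ⟨hac.trans ht.1, ht.2⟩).1
  rw [h_deficit] at h_left
  rw [intervalIntegral.integral_sub_integral_mul_eq (f c) hc hcg hf hg hfg,
    ← hf_bv.toReal_eVariationOn_Icc_add_Icc hac hcb]
  calc _ ≤ _ := abs_sub _ _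
    _ ≤ _ := add_le_add h_left h_right
    _ = _ := by ring

theorem steffensen_bounded_variation_one (a b : ℝ) (hab : a < b) (f g : ℝ → ℝ)
    (hg : IntervalIntegrable g volume a b)
    (hg01 : ∀ t ∈ Set.Icc a b, 0 ≤ g t ∧ g t ≤ 1)
    (hf_bv : BoundedVariationOn f (Set.Icc a b))
    (hf : IntervalIntegrable f volume a b)
    (hfg : IntervalIntegrable (fun t => f t * g t) volume a b)
    (lam : ℝ) (hlam : lam = ∫ t in a..b, g t) :
    |(∫ t in a..(a + lam), f t) - ∫ t in a..b, f t * g t|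
        ≤ (∫ t in (a + lam)..b, g t) * (eVariationOn f (Set.Icc a b)).toReal ∧
      (∫ t in (a + lam)..b, g t) * (eVariationOn f (Set.Icc a b)).toReal
        ≤ (b - a - lam) * (eVariationOn f (Set.Icc a b)).toReal := by
  obtain ⟨hlam_nonneg, hlam_le⟩ : lam ∈ Icc 0 (b - a) :=
    hlam ▸ intervalIntegral.integral_mem_Icc_of_mem_unitInterval hab.le hg hg01
  have hac : a ≤ a + lam := by linarith
  have hcb : a + lam ≤ b := by linarith
  have h_tail := intervalIntegral.integral_mem_Icc_of_mem_unitInterval hcb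
    (hg.mono_set (uIcc_subset_uIcc_right (Icc_subset_uIcc ⟨hac, hcb⟩)))
    fun t ht => hg01 t ⟨hac.trans ht.1, ht.2⟩
  refine ⟨hf_bv.abs_integral_sub_integral_mul_le hac hcb (by rw [hlam]; ring) hg01 hf hg hfg,
    mul_le_mul_of_nonneg_right ?_ ENNReal.toReal_nonneg⟩
  linarith [h_tail.2]
end

section
/- Let f, g : [a,b] → ℝ with g integrable, 0 ≤ g(t) ≤ 1 for all t ∈ [a,b], f monotone nondecreasing on [a,b], and f·g integrable on [a,b]. Setting λ = ∫_a^b g(t) dt, one has |∫_a^b f(t) g(t) dt − ∫_{b-λ}^b f(t) dt| ≤ λ[f(b) − f(b−λ)] + (b − a − λ)[f(b−λ) − f(a)]. -/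
/-! With `c = b - λ`, the hypothesis `∫ g = λ = b - c` gives, for any constant `k`,
`∫ₐᵇ f g - ∫_cᵇ f = ∫ₐᶜ (f - k) g + ∫_cᵇ (k - f)(1 - g)`. Taking `k = f c`, monotonicity and
`0 ≤ g ≤ 1` put the first integrand in `[f a - f c, 0]` and the second in `[f c - f b, 0]`,
so both integrals are nonpositive and bounded below by the length of their interval times the
jump of `f` across it. -/

open MeasureTheory Set intervalIntegral

lemma mul_mem_Icc_of_mem_Icc_of_mem_unitInterval {x s m : ℝ} (hx : x ∈ Icc m 0)
    (hs : s ∈ Icc (0 : ℝ) 1) : x * s ∈ Icc m 0 :=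
  ⟨by nlinarith [hx.1, hx.2, hs.1, hs.2], mul_nonpos_of_nonpos_of_nonneg hx.2 hs.1⟩

lemma intervalIntegral.integral_mem_Icc_of_forall_mem_Icc {f : ℝ → ℝ} {a b m M : ℝ}
    (hab : a ≤ b) (hf : IntervalIntegrable f volume a b) (h : ∀ t ∈ Icc a b, f t ∈ Icc m M) :
    ∫ t in a..b, f t ∈ Icc ((b - a) * m) ((b - a) * M) := by
  constructor
  · simpa using integral_mono_on hab intervalIntegrable_const hf fun t ht => (h t ht).1
  · simpa using integral_mono_on hab hf intervalIntegrable_const fun t ht => (h t ht).2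

lemma intervalIntegral.integral_mul_sub_integral_eq {f g : ℝ → ℝ} {a b c : ℝ} (k : ℝ)
    (hfg_ac : IntervalIntegrable (fun t => f t * g t) volume a c)
    (hfg_cb : IntervalIntegrable (fun t => f t * g t) volume c b)
    (hg_ac : IntervalIntegrable g volume a c) (hg_cb : IntervalIntegrable g volume c b)
    (hf_cb : IntervalIntegrable f volume c b) :
    (∫ t in a..b, f t * g t) - ∫ t in c..b, f t =
      (∫ t in a..c, (f t - k) * g t) + (∫ t in c..b, (k - f t) * (1 - g t))
        + k * ((∫ t in a..b, g t) - (b - c)) := by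
  rw [← integral_add_adjacent_intervals hfg_ac hfg_cb,
    ← integral_add_adjacent_intervals hg_ac hg_cb]
  have h_ac : ∫ t in a..c, (f t - k) * g t = (∫ t in a..c, f t * g t) - k * ∫ t in a..c, g t := by
    simp only [sub_mul]
    rw [integral_sub hfg_ac (hg_ac.const_mul k), integral_const_mul]
  have h_cb : ∫ t in c..b, (k - f t) * (1 - g t) =
      (b - c) * k - (∫ t in c..b, f t) - (k * ∫ t in c..b, g t) + ∫ t in c..b, f t * g t := by
    have : (fun t => (k - f t) * (1 - g t)) = fun t => (k - f t) - (k * g t - f t * g t) := by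
      funext t; ring
    rw [this, integral_sub (intervalIntegrable_const.sub hf_cb) ((hg_cb.const_mul k).sub hfg_cb),
      integral_sub intervalIntegrable_const hf_cb, integral_sub (hg_cb.const_mul k) hfg_cb,
      integral_const, integral_const_mul, smul_eq_mul]
    ring
  rw [h_ac, h_cb]
  ring

lemma intervalIntegral.integral_sub_mul_mem_Icc_of_monotoneOn {f g : ℝ → ℝ} {a c : ℝ}
    (hac : a ≤ c) (hf : MonotoneOn f (Icc a c)) (hg01 : ∀ t ∈ Icc a c, g t ∈ Icc 0 1)
    (hfg : IntervalIntegrable (fun t => f t * g t) volume a c)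
    (hg : IntervalIntegrable g volume a c) :
    ∫ t in a..c, (f t - f c) * g t ∈ Icc ((c - a) * (f a - f c)) 0 := by
  rw [← mul_zero (c - a)]
  refine integral_mem_Icc_of_forall_mem_Icc hac
    (by simpa only [sub_mul] using hfg.sub (hg.const_mul (f c))) fun t ht => ?_
  exact mul_mem_Icc_of_mem_Icc_of_mem_unitInterval
    ⟨sub_le_sub_right (hf (left_mem_Icc.2 hac) ht ht.1) _,
      sub_nonpos.2 (hf ht (right_mem_Icc.2 hac) ht.2)⟩ (hg01 t ht)

lemma intervalIntegral.integral_sub_mul_one_sub_mem_Icc_of_monotoneOn {f g : ℝ → ℝ} {c b : ℝ}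
    (hcb : c ≤ b) (hf : MonotoneOn f (Icc c b)) (hg01 : ∀ t ∈ Icc c b, g t ∈ Icc 0 1)
    (hfg : IntervalIntegrable (fun t => f t * g t) volume c b)
    (hg : IntervalIntegrable g volume c b) :
    ∫ t in c..b, (f c - f t) * (1 - g t) ∈ Icc ((b - c) * (f c - f b)) 0 := by
  have hf_int : IntervalIntegrable f volume c b := (uIcc_of_le hcb ▸ hf).intervalIntegrable
  rw [← mul_zero (b - c)]
  refine integral_mem_Icc_of_forall_mem_Icc hcb ?_ fun t ht => ?_
  · convert (intervalIntegrable_const (c := f c)).sub hf_int |>.sub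
      ((hg.const_mul (f c)).sub hfg) using 2 with t
    ring
  · exact mul_mem_Icc_of_mem_Icc_of_mem_unitInterval
      ⟨sub_le_sub_left (hf ht (right_mem_Icc.2 hcb) ht.2) _,
        sub_nonpos.2 (hf (left_mem_Icc.2 hcb) ht ht.1)⟩
      ⟨sub_nonneg.2 (hg01 t ht).2, sub_le_self _ (hg01 t ht).1⟩

theorem steffensen_monotone_two (a b : ℝ) (hab : a < b) (f g : ℝ → ℝ)
    (hg : IntervalIntegrable g volume a b)
    (hg01 : ∀ t ∈ Set.Icc a b, 0 ≤ g t ∧ g t ≤ 1)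
    (hf_mono : MonotoneOn f (Set.Icc a b))
    (hfg : IntervalIntegrable (fun t => f t * g t) volume a b)
    (lam : ℝ) (hlam : lam = ∫ t in a..b, g t) :
    |(∫ t in a..b, f t * g t) - ∫ t in (b - lam)..b, f t|
      ≤ lam * (f b - f (b - lam)) + (b - a - lam) * (f (b - lam) - f a) := by
  have hlam_mem : lam ∈ Icc ((b - a) * 0) ((b - a) * 1) :=
    hlam ▸ integral_mem_Icc_of_forall_mem_Icc hab.le hg hg01
  set c := b - lam
  have hc : c ∈ Icc a b := ⟨by linarith [hlam_mem.2], by linarith [hlam_mem.1]⟩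
  have h_ac : uIcc a c ⊆ uIcc a b := uIcc_subset_uIcc_left (mem_uIcc_of_le hc.1 hc.2)
  have h_cb : uIcc c b ⊆ uIcc a b := uIcc_subset_uIcc_right (mem_uIcc_of_le hc.1 hc.2)
  have hf_cb : MonotoneOn f (Icc c b) := hf_mono.mono (Icc_subset_Icc_left hc.1)
  rw [integral_mul_sub_integral_eq (f c) (hfg.mono_set h_ac) (hfg.mono_set h_cb)
    (hg.mono_set h_ac) (hg.mono_set h_cb) (uIcc_of_le hc.2 ▸ hf_cb).intervalIntegrable, ← hlam,
    show lam - (b - c) = 0 by ring, mul_zero, add_zero]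
  have hI_ac := integral_sub_mul_mem_Icc_of_monotoneOn hc.1
    (hf_mono.mono (Icc_subset_Icc_right hc.2))
    (fun t ht => hg01 t (Icc_subset_Icc_right hc.2 ht)) (hfg.mono_set h_ac) (hg.mono_set h_ac)
  have hI_cb := integral_sub_mul_one_sub_mem_Icc_of_monotoneOn hc.2 hf_cb
    (fun t ht => hg01 t (Icc_subset_Icc_left hc.1 ht)) (hfg.mono_set h_cb) (hg.mono_set h_cb)
  rw [abs_le]
  constructor <;> linarith [hI_ac.1, hI_ac.2, hI_cb.1, hI_cb.2]
end

section
/- Let g : [a,b] → ℝ be integrable with 0 ≤ g(t) ≤ 1 for all t ∈ [a,b], and let f : [a,b] → ℝ be absolutely continuous on [a,b] with derivative f' ∈ L^1[a,b]. Setting λ = ∫_a^b g(t) dt, one has |∫_a^{a+λ} f(t) dt − ∫_a^b f(t) g(t) dt| ≤ (∫_{a+λ}^b g(t) dt) · ‖f'‖_{L^1[a,b]}. -/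
/-!
Put `c = a + λ` and `k = 𝟙_{(-∞, c]} - g`, so that the left-hand side is `|∫ₐᵇ f k|` and
`∫ₐᵇ k = 0`. Integrating by parts against the primitive `K s = ∫ₐˢ k` (which vanishes at both
ends) gives `∫ₐᵇ f k = -∫ₐᵇ f' K`, and `0 ≤ K s ≤ ∫_c^b g` because `s ↦ ∫ₐˢ g` is nondecreasing,
`1`-Lipschitz and equal to `c - a` at `b`.
-/

open MeasureTheory Set

section

variable {a b : ℝ} {f f' k : ℝ → ℝ}

theorem integral_mul_eq_neg_integral_mul_primitive
    (hf' : IntervalIntegrable f' volume a b) (hk : IntervalIntegrable k volume a b)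
    (hf : ∀ x ∈ uIcc a b, f x = f a + ∫ t in a..x, f' t) (hk0 : ∫ t in a..b, k t = 0) :
    ∫ t in a..b, f t * k t = -∫ t in a..b, f' t * ∫ s in a..t, k s := by
  set F : ℝ → ℝ := fun x ↦ f a + ∫ t in a..x, f' t
  set K : ℝ → ℝ := fun x ↦ ∫ t in a..x, k t
  have hF : AbsolutelyContinuousOnInterval F a b :=
    (LipschitzWith.const (f a)).lipschitzOnWith.absolutelyContinuousOnInterval.add
      (hf'.absolutelyContinuousOnInterval_intervalIntegral left_mem_uIcc)
  have hK : AbsolutelyContinuousOnInterval K a b :=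
    hk.absolutelyContinuousOnInterval_intervalIntegral left_mem_uIcc
  calc ∫ t in a..b, f t * k t = ∫ t in a..b, F t * deriv K t := by
        refine intervalIntegral.integral_congr_ae ?_
        filter_upwards [hk.ae_hasDerivAt_integral] with t ht htab
        rw [hf t (uIoc_subset_uIcc htab), (ht (uIoc_subset_uIcc htab) a left_mem_uIcc).deriv]
    _ = -∫ t in a..b, deriv F t * K t := by
        rw [hF.integral_mul_deriv_eq_deriv_mul hK]
        simp [K, hk0]
    _ = -∫ t in a..b, f' t * K t := by
        congr 1
        refine intervalIntegral.integral_congr_ae ?_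
        filter_upwards [hf'.ae_hasDerivAt_integral] with t ht htab
        rw [((ht (uIoc_subset_uIcc htab) a left_mem_uIcc).const_add (f a)).deriv]

theorem abs_integral_mul_le_of_abs_primitive_le (hab : a ≤ b) {M : ℝ}
    (hf' : IntervalIntegrable f' volume a b) (hk : IntervalIntegrable k volume a b)
    (hf : ∀ x ∈ Icc a b, f x = f a + ∫ t in a..x, f' t) (hk0 : ∫ t in a..b, k t = 0)
    (hM : ∀ s ∈ Icc a b, |∫ t in a..s, k t| ≤ M) :
    |∫ t in a..b, f t * k t| ≤ M * ∫ t in a..b, |f' t| := by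
  rw [← uIcc_of_le hab] at hf
  rw [integral_mul_eq_neg_integral_mul_primitive hf' hk hf hk0, abs_neg,
    ← intervalIntegral.integral_const_mul, ← Real.norm_eq_abs]
  refine intervalIntegral.norm_integral_le_of_norm_le hab
    (Filter.Eventually.of_forall fun t ht ↦ ?_) (hf'.abs.const_mul M)
  rw [Real.norm_eq_abs, abs_mul, mul_comm]
  exact mul_le_mul_of_nonneg_right (hM t (Ioc_subset_Icc_self ht)) (abs_nonneg _)

theorem continuousOn_of_eq_add_integral (hf' : IntervalIntegrable f' volume a b)
    (hf : ∀ x ∈ uIcc a b, f x = f a + ∫ t in a..x, f' t) : ContinuousOn f (uIcc a b) :=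
  ((continuousOn_const (c := f a)).add
    (intervalIntegral.continuousOn_primitive_interval' hf' left_mem_uIcc)).congr hf

end

section

variable {a b c : ℝ} {g : ℝ → ℝ}

theorem intervalIntegrable_indicator_setOf_le_one :
    IntervalIntegrable ({x | x ≤ c}.indicator (1 : ℝ → ℝ)) volume a b :=
  ((integrableOn_const (C := (1 : ℝ)) measure_Icc_lt_top.ne).indicator
    measurableSet_Iic).intervalIntegrable

theorem integral_indicator_setOf_le_one {s : ℝ} (hc : a ≤ c) (hs : a ≤ s) :
    ∫ t in a..s, {x | x ≤ c}.indicator (1 : ℝ → ℝ) t = min s c - a := by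
  rcases le_total s c with hsc | hcs
  · rw [min_eq_left hsc, intervalIntegral.integral_congr (g := fun _ ↦ (1 : ℝ)),
      intervalIntegral.integral_const, smul_eq_mul, mul_one]
    intro t ht
    rw [uIcc_of_le hs] at ht
    simp [ht.2.trans hsc]
  · rw [min_eq_right hcs, intervalIntegral.integral_indicator ⟨hc, hcs⟩]
    simp

theorem integral_mem_Icc_zero_sub_of_mapsTo (hab : a ≤ b) (hg : IntervalIntegrable g volume a b)
    (hg01 : MapsTo g (Icc a b) (Icc 0 1)) : ∫ t in a..b, g t ∈ Icc 0 (b - a) :=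
  ⟨intervalIntegral.integral_nonneg hab fun _ ht ↦ (hg01 ht).1, by
    simpa using intervalIntegral.integral_mono_on hab hg intervalIntegrable_const
      fun _ ht ↦ (hg01 ht).2⟩

theorem add_integral_mem_Icc_of_mapsTo (hab : a ≤ b) (hg : IntervalIntegrable g volume a b)
    (hg01 : MapsTo g (Icc a b) (Icc 0 1)) : a + ∫ t in a..b, g t ∈ Icc a b := by
  have := integral_mem_Icc_zero_sub_of_mapsTo hab hg hg01
  constructor <;> linarith [this.1, this.2]

theorem sub_integral_mem_Icc_of_mapsTo {s : ℝ}
    (hg : IntervalIntegrable g volume a b) (hg01 : MapsTo g (Icc a b) (Icc 0 1))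
    (hc : c = a + ∫ t in a..b, g t) (hs : s ∈ Icc a b) :
    min s c - a - ∫ t in a..s, g t ∈ Icc 0 (∫ t in c..b, g t) := by
  have hab : a ≤ b := hs.1.trans hs.2
  have hint {x y : ℝ} (hx : x ∈ Icc a b) (hy : y ∈ Icc a b) : IntervalIntegrable g volume x y :=
    hg.mono_set (uIcc_subset_uIcc (Icc_subset_uIcc hx) (Icc_subset_uIcc hy))
  have hbound {x y : ℝ} (hax : a ≤ x) (hxy : x ≤ y) (hyb : y ≤ b) :
      ∫ t in x..y, g t ∈ Icc 0 (y - x) :=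
    integral_mem_Icc_zero_sub_of_mapsTo hxy (hint ⟨hax, hxy.trans hyb⟩ ⟨hax.trans hxy, hyb⟩)
      (hg01.mono_left (Icc_subset_Icc hax hyb))
  have hsplit {x y z : ℝ} (hx : x ∈ Icc a b) (hy : y ∈ Icc a b) (hz : z ∈ Icc a b) :
      (∫ t in x..y, g t) + ∫ t in y..z, g t = ∫ t in x..z, g t :=
    intervalIntegral.integral_add_adjacent_intervals (hint hx hy) (hint hy hz)
  have ha : a ∈ Icc a b := left_mem_Icc.2 hab
  have hb : b ∈ Icc a b := right_mem_Icc.2 hab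
  have hcab : c ∈ Icc a b := hc ▸ add_integral_mem_Icc_of_mapsTo hab hg hg01
  rcases le_total s c with hsc | hcs
  · have := hsplit ha hs hcab
    have := hsplit ha hcab hb
    have := (hbound le_rfl hs.1 hs.2).2
    have := (hbound hs.1 hsc hcab.2).2
    rw [min_eq_left hsc]
    constructor <;> linarith
  · have := hsplit ha hs hb
    have := hsplit hcab hs hb
    have := (hbound hcab.1 hcs hs.2).1
    have := (hbound hs.1 hs.2 le_rfl).1
    rw [min_eq_right hcs]
    constructor <;> linarith

theorem integral_indicator_sub_eq {s : ℝ} (hc : a ≤ c) (hs : a ≤ s)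
    (hg : IntervalIntegrable g volume a s) :
    ∫ t in a..s, ({x | x ≤ c}.indicator 1 t - g t) = min s c - a - ∫ t in a..s, g t := by
  rw [intervalIntegral.integral_sub intervalIntegrable_indicator_setOf_le_one hg,
    integral_indicator_setOf_le_one hc hs]

theorem integral_indicator_sub_eq_zero (hab : a ≤ b) (hg : IntervalIntegrable g volume a b)
    (hg01 : MapsTo g (Icc a b) (Icc 0 1)) (hc : c = a + ∫ t in a..b, g t) :
    ∫ t in a..b, ({x | x ≤ c}.indicator 1 t - g t) = 0 := by
  have hcab : c ∈ Icc a b := hc ▸ add_integral_mem_Icc_of_mapsTo hab hg hg01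
  rw [integral_indicator_sub_eq hcab.1 hab hg, min_eq_right hcab.2]
  linarith

theorem abs_integral_indicator_sub_le (hg : IntervalIntegrable g volume a b)
    (hg01 : MapsTo g (Icc a b) (Icc 0 1)) (hc : c = a + ∫ t in a..b, g t) {s : ℝ}
    (hs : s ∈ Icc a b) :
    |∫ t in a..s, ({x | x ≤ c}.indicator 1 t - g t)| ≤ ∫ t in c..b, g t := by
  have hcab : c ∈ Icc a b := hc ▸ add_integral_mem_Icc_of_mapsTo (hs.1.trans hs.2) hg hg01
  have hmem := sub_integral_mem_Icc_of_mapsTo hg hg01 hc hs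
  rw [integral_indicator_sub_eq hcab.1 hs.1
    (hg.mono_set (uIcc_subset_uIcc_left (Icc_subset_uIcc hs)))]
  exact abs_le.2 ⟨by linarith [hmem.1, hmem.2], hmem.2⟩

theorem integral_mul_indicator_sub {f : ℝ → ℝ} (hc : c ∈ Icc a b)
    (hf : ContinuousOn f (uIcc a b)) (hg : IntervalIntegrable g volume a b) :
    ∫ t in a..b, f t * ({x | x ≤ c}.indicator 1 t - g t)
      = (∫ t in a..c, f t) - ∫ t in a..b, f t * g t := by
  simp only [mul_sub]
  rw [intervalIntegral.integral_sub
      (intervalIntegrable_indicator_setOf_le_one.continuousOn_mul hf) (hg.continuousOn_mul hf),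
    ← intervalIntegral.integral_indicator hc]
  congr 1
  refine intervalIntegral.integral_congr fun t _ ↦ ?_
  simp [indicator_apply]

end

theorem steffensen_L1_one (a b : ℝ) (hab : a < b) (f f' g : ℝ → ℝ)
    (hg : IntervalIntegrable g volume a b)
    (hg01 : ∀ t ∈ Set.Icc a b, 0 ≤ g t ∧ g t ≤ 1)
    (hf' : IntervalIntegrable f' volume a b)
    (hAC : ∀ x ∈ Set.Icc a b, f x = f a + ∫ t in a..x, f' t)
    (lam : ℝ) (hlam : lam = ∫ t in a..b, g t) :
    |(∫ t in a..(a + lam), f t) - ∫ t in a..b, f t * g t|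
      ≤ (∫ t in (a + lam)..b, g t) * ∫ x in a..b, |f' x| := by
  subst hlam
  rw [← integral_mul_indicator_sub (add_integral_mem_Icc_of_mapsTo hab.le hg hg01)
    (continuousOn_of_eq_add_integral hf' (uIcc_of_le hab.le ▸ hAC)) hg]
  exact abs_integral_mul_le_of_abs_primitive_le hab.le hf'
    (intervalIntegrable_indicator_setOf_le_one.sub hg) hAC
    (integral_indicator_sub_eq_zero hab.le hg hg01 rfl)
    fun s hs ↦ abs_integral_indicator_sub_le hg hg01 rfl hs
end

section
/- Let g : [a,b] → ℝ be integrable with 0 ≤ g(t) ≤ 1 for all t ∈ [a,b], and let f : [a,b] → ℝ be absolutely continuous on [a,b] with derivative f' essentially bounded on [a,b]. Setting λ = ∫_a^b g(t) dt, one has |∫_a^b f(t) g(t) dt − ∫_{b-λ}^b f(t) dt| ≤ (1/2)[λ² + (b − a − λ)²] · ‖f'‖_{L^∞[a,b]}. -/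
open MeasureTheory Set intervalIntegral
open scoped NNReal ENNReal Interval

/-!
Put `c = b - λ`. Since `∫_a^b g = b - c`, the constant `f c` can be subtracted for free:
`∫_a^b f g - ∫_c^b f = ∫_a^c (f - f c) g - ∫_c^b (f - f c) (1 - g)`.
Both weights `g` and `1 - g` take values in `[0, 1]`, and `f` is `‖f'‖_∞`-Lipschitz on `[a, b]`,
so the two integrals are at most `‖f'‖_∞ (c - a)² / 2` and `‖f'‖_∞ (b - c)² / 2`.
-/

theorem MeasureTheory.MemLp.ae_norm_le_toNNReal_eLpNormEssSup {α E : Type*}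
    {m : MeasurableSpace α} [NormedAddCommGroup E] {μ : Measure α} {f : α → E}
    (hf : MemLp f ∞ μ) : ∀ᵐ x ∂μ, ‖f x‖ ≤ (eLpNormEssSup f μ).toNNReal := by
  have hfin : eLpNormEssSup f μ ≠ ∞ := by
    simpa only [eLpNorm_exponent_top] using hf.eLpNorm_ne_top
  filter_upwards [ae_le_eLpNormEssSup (f := f) (μ := μ)] with x hx
  rw [← ofReal_norm, ENNReal.ofReal_le_iff_le_toReal hfin] at hx
  rwa [ENNReal.coe_toNNReal_eq_toReal]

theorem lipschitzOnWith_of_eq_add_integral {E : Type*} [NormedAddCommGroup E] [NormedSpace ℝ E]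
    {f f' : ℝ → E} {a b : ℝ} {K : ℝ≥0} (hf' : IntervalIntegrable f' volume a b)
    (hf : ∀ x ∈ Icc a b, f x = f a + ∫ t in a..x, f' t)
    (hK : ∀ᵐ t ∂volume.restrict (Icc a b), ‖f' t‖ ≤ K) :
    LipschitzOnWith K f (Icc a b) := by
  refine LipschitzOnWith.of_dist_le_mul fun x hx y hy => ?_
  have hint : ∀ z ∈ Icc a b, IntervalIntegrable f' volume a z := fun z hz =>
    hf'.mono_set (uIcc_subset_uIcc left_mem_uIcc (Icc_subset_uIcc hz))
  have hKyx : ∀ᵐ t, t ∈ Ι y x → ‖f' t‖ ≤ K := by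
    rw [ae_restrict_iff' measurableSet_Icc] at hK
    filter_upwards [hK] with t ht hmem using
      ht (uIcc_subset_Icc hy hx (uIoc_subset_uIcc hmem))
  rw [dist_eq_norm, Real.dist_eq, hf x hx, hf y hy, add_sub_add_left_eq_sub,
    integral_interval_sub_left (hint x hx) (hint y hy)]
  exact norm_integral_le_of_norm_le_const_ae hKyx

theorem abs_integral_le_of_abs_le_mul_abs_sub {h : ℝ → ℝ} {c d M : ℝ}
    (hh : ∀ t ∈ Ι c d, |h t| ≤ M * |t - c|) :
    |∫ t in c..d, h t| ≤ M * (d - c) ^ 2 / 2 := by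
  have hbound : Integrable (fun t => M * |t - c|) (volume.restrict (Ι c d)) :=
    (continuous_const.mul (continuous_id.sub continuous_const).abs).integrableOn_uIoc
  calc |∫ t in c..d, h t| = ‖∫ t in Ι c d, h t‖ := norm_integral_eq_norm_integral_uIoc h
    _ ≤ ∫ t in Ι c d, M * |t - c| :=
      norm_integral_le_of_norm_le hbound ((ae_restrict_iff' measurableSet_uIoc).2 (ae_of_all _ hh))
    _ = M * (d - c) ^ 2 / 2 := by
      have h1 := integral_pow_abs_sub_uIoc (a := c) (b := d) 1
      norm_num only [pow_one, sq_abs] at h1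
      rw [MeasureTheory.integral_const_mul, h1, mul_div_assoc]

theorem integral_mul_sub_integral_eq {F g : ℝ → ℝ} {a b c : ℝ} (hF : ContinuousOn F (Icc a b))
    (hg : IntervalIntegrable g volume a b) (hc : c ∈ Icc a b) (hgc : ∫ t in a..b, g t = b - c) :
    (∫ t in a..b, F t * g t) - ∫ t in c..b, F t =
      (∫ t in a..c, (F t - F c) * g t) - ∫ t in c..b, (F t - F c) * (1 - g t) := by
  have hab : uIcc a b = Icc a b := uIcc_of_le (hc.1.trans hc.2)
  have hl : uIcc a c ⊆ uIcc a b := uIcc_subset_uIcc_left (by rw [hab]; exact hc)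
  have hr : uIcc c b ⊆ uIcc a b := uIcc_subset_uIcc_right (by rw [hab]; exact hc)
  have hFg : IntervalIntegrable (fun t => F t * g t) volume a b :=
    hg.continuousOn_mul (hab ▸ hF)
  have hFr : IntervalIntegrable F volume c b := (hF.mono (hab ▸ hr)).intervalIntegrable
  rw [← integral_add_adjacent_intervals (hFg.mono_set hl) (hFg.mono_set hr),
    ← integral_add_adjacent_intervals (hg.mono_set hl) (hg.mono_set hr)] at *
  simp only [sub_mul, mul_sub, mul_one]
  rw [integral_sub (hFg.mono_set hl) ((hg.mono_set hl).const_mul _),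
    integral_sub (hFr.sub intervalIntegrable_const)
      ((hFg.mono_set hr).sub ((hg.mono_set hr).const_mul _)),
    integral_sub hFr intervalIntegrable_const,
    integral_sub (hFg.mono_set hr) ((hg.mono_set hr).const_mul _),
    intervalIntegral.integral_const_mul, intervalIntegral.integral_const_mul,
    intervalIntegral.integral_const, smul_eq_mul]
  linear_combination (F c) * hgc

theorem abs_integral_mul_sub_integral_le {F g : ℝ → ℝ} {a b c : ℝ} {K : ℝ≥0}
    (hF : LipschitzOnWith K F (Icc a b)) (hg : IntervalIntegrable g volume a b)
    (hg01 : ∀ t ∈ Icc a b, 0 ≤ g t ∧ g t ≤ 1) (hc : c ∈ Icc a b)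
    (hgc : ∫ t in a..b, g t = b - c) :
    |(∫ t in a..b, F t * g t) - ∫ t in c..b, F t| ≤ K * ((c - a) ^ 2 + (b - c) ^ 2) / 2 := by
  have hsub : ∀ {p}, p ∈ Icc a b → Ι c p ⊆ Icc a b := fun hp =>
    uIoc_subset_uIcc.trans (uIcc_subset_Icc hc hp)
  have hbound : ∀ {w : ℝ → ℝ} {p}, p ∈ Icc a b → (∀ t ∈ Icc a b, |w t| ≤ 1) →
      |∫ t in c..p, (F t - F c) * w t| ≤ K * (p - c) ^ 2 / 2 := fun hp hw =>
    abs_integral_le_of_abs_le_mul_abs_sub fun t ht => by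
      have hlip := hF.dist_le_mul t (hsub hp ht) c hc
      rw [Real.dist_eq, Real.dist_eq] at hlip
      rw [abs_mul]
      exact (mul_le_of_le_one_right (abs_nonneg _) (hw t (hsub hp ht))).trans hlip
  have hA := hbound (w := g) (left_mem_Icc.2 (hc.1.trans hc.2)) fun t ht =>
    abs_le.2 ⟨by linarith [hg01 t ht], (hg01 t ht).2⟩
  have hB := hbound (w := fun t => 1 - g t) (right_mem_Icc.2 (hc.1.trans hc.2)) fun t ht =>
    abs_le.2 ⟨by linarith [hg01 t ht], by linarith [hg01 t ht]⟩
  rw [integral_symm, abs_neg] at hA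
  rw [integral_mul_sub_integral_eq hF.continuousOn hg hc hgc]
  exact (abs_sub _ _).trans (add_le_add hA hB) |>.trans_eq (by ring)

theorem steffensen_Linfty_two (a b : ℝ) (hab : a < b) (f f' g : ℝ → ℝ)
    (hg : IntervalIntegrable g volume a b)
    (hg01 : ∀ t ∈ Set.Icc a b, 0 ≤ g t ∧ g t ≤ 1)
    (hf' : IntervalIntegrable f' volume a b)
    (hAC : ∀ x ∈ Set.Icc a b, f x = f a + ∫ t in a..x, f' t)
    (hbdd : MemLp f' ⊤ (volume.restrict (Set.Icc a b)))
    (lam : ℝ) (hlam : lam = ∫ t in a..b, g t) :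
    |(∫ t in a..b, f t * g t) - ∫ t in (b - lam)..b, f t|
      ≤ 1 / 2 * (lam ^ 2 + (b - a - lam) ^ 2)
          * (eLpNormEssSup f' (volume.restrict (Set.Icc a b))).toReal := by
  have hlam0 : 0 ≤ lam := hlam ▸ integral_nonneg hab.le fun t ht => (hg01 t ht).1
  have hlam1 : lam ≤ b - a := by
    rw [hlam, ← integral_one]
    exact integral_mono_on hab.le hg intervalIntegrable_const fun t ht => (hg01 t ht).2
  have hf := lipschitzOnWith_of_eq_add_integral hf' hAC hbdd.ae_norm_le_toNNReal_eLpNormEssSup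
  have key := abs_integral_mul_sub_integral_le hf hg hg01 (c := b - lam)
    ⟨by linarith, by linarith⟩ (by rw [← hlam]; ring)
  rw [ENNReal.coe_toNNReal_eq_toReal] at key
  exact key.trans_eq (by ring)
end

section
/- Let g : [a,b] → ℝ be integrable with 0 ≤ g(t) ≤ 1 for all t ∈ [a,b], and let f : [a,b] → ℝ be absolutely continuous on [a,b] with derivative f' ∈ L^1[a,b]. Setting λ = ∫_a^b g(t) dt, one has |∫_a^b f(t) g(t) dt − ∫_{b-λ}^b f(t) dt| ≤ (∫_a^{b-λ} g(t) dt) · ‖f'‖_{L^1[a,b]}. -/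
/-!
Write `c = b - λ`, so that `∫ t in c..b, f t = ∫ t in a..b, f t * 1_{(c, ∞)} t`, and
`1_{(c, ∞)}` has the same integral `λ` over `[a, b]` as `g`. For every integrable `h`,
Fubini on the triangle `a ≤ t ≤ s ≤ b` turns `f t = f b - ∫ s in t..b, f' s` into the
integration by parts `∫ f h = f b * ∫ h - ∫ H f'` with `H s = ∫ t in a..s, h t`, without any
differentiability of `f` or `H`. Subtracting the two instances leaves
`∫ s in a..b, (max (s - c) 0 - ∫ t in a..s, g t) * f' s`, and the kernel is bounded in absolute
value by `∫ t in a..c, g t`.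
-/

open MeasureTheory Set intervalIntegral

section IndicatorIntegrals

variable {E : Type*} [NormedAddCommGroup E] [NormedSpace ℝ E] {μ : Measure ℝ} {f : ℝ → E}
  {a₁ a₂ a₃ : ℝ}

theorem intervalIntegral.integral_indicator_Ioi (h : a₂ ∈ Icc a₁ a₃) :
    ∫ x in a₁..a₃, (Ioi a₂).indicator f x ∂μ = ∫ x in a₂..a₃, f x ∂μ := by
  rw [integral_of_le (h.1.trans h.2), integral_of_le h.2, setIntegral_indicator measurableSet_Ioi,
    Ioc_inter_Ioi, sup_eq_right.2 h.1]

theorem intervalIntegral.integral_indicator_Ici [NullSingletonClass μ]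
    (h : a₂ ∈ Icc a₁ a₃) :
    ∫ x in a₁..a₃, (Ici a₂).indicator f x ∂μ = ∫ x in a₂..a₃, f x ∂μ := by
  rw [← integral_indicator_Ioi h]
  refine integral_congr_ae ?_
  filter_upwards [indicator_ae_eq_of_ae_eq_set (f := f) (Ioi_ae_eq_Ici (μ := μ) (a := a₂))]
    with x hx _ using hx.symm

end IndicatorIntegrals

theorem intervalIntegral.integral_indicator_Ioi_one {a c s : ℝ} (hac : a ≤ c) (has : a ≤ s) :
    ∫ t in a..s, (Ioi c).indicator 1 t = max (s - c) 0 := by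
  rcases le_total s c with hsc | hcs
  · rw [max_eq_right (by linarith), integral_congr (g := fun _ => 0) fun t ht => ?_, integral_zero]
    rw [uIcc_of_le has] at ht
    exact indicator_of_notMem (not_lt.2 (ht.2.trans hsc)) _
  · rw [integral_indicator_Ioi ⟨hac, hcs⟩, max_eq_left (by linarith)]
    simp

theorem intervalIntegral.integral_mul_integral_swap_triangle {a b : ℝ} {g k : ℝ → ℝ}
    (hab : a ≤ b) (hg : IntervalIntegrable g volume a b) (hk : IntervalIntegrable k volume a b) :
    ∫ t in a..b, g t * ∫ s in t..b, k s = ∫ s in a..b, (∫ t in a..s, g t) * k s := by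
  have hF : IntegrableOn (Function.uncurry fun t s => g t * (Ici t).indicator k s)
      (uIoc a b ×ˢ uIoc a b) := by
    have hind : (Function.uncurry fun t s => g t * (Ici t).indicator k s) =
        {p : ℝ × ℝ | p.1 ≤ p.2}.indicator fun p => g p.1 * k p.2 := by
      funext ⟨t, s⟩
      simp [indicator_apply]
    rw [hind, IntegrableOn, Measure.volume_eq_prod, ← Measure.prod_restrict]
    rw [intervalIntegrable_iff] at hg hk
    exact (hg.mul_prod hk).indicator (measurableSet_le measurable_fst measurable_snd)
  calc ∫ t in a..b, g t * ∫ s in t..b, k s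
      = ∫ t in a..b, ∫ s in a..b, g t * (Ici t).indicator k s := by
        refine integral_congr fun t ht => ?_
        rw [uIcc_of_le hab] at ht
        simp only [integral_const_mul, integral_indicator_Ici ht]
    _ = ∫ s in a..b, ∫ t in a..b, g t * (Ici t).indicator k s :=
        intervalIntegral_intervalIntegral_swap hF
    _ = ∫ s in a..b, (∫ t in a..s, g t) * k s := by
        refine integral_congr fun s hs => ?_
        rw [uIcc_of_le hab] at hs
        have hswap : ∀ t, g t * (Ici t).indicator k s = {t | t ≤ s}.indicator g t * k s := by
          intro t
          by_cases hts : t ≤ s <;> simp [hts]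
        simp only [hswap, integral_mul_const, integral_indicator hs]

theorem integral_mul_eq_sub_integral_primitive_mul_deriv {a b : ℝ} {f f' h : ℝ → ℝ}
    (hab : a ≤ b) (hf' : IntervalIntegrable f' volume a b)
    (hf : ∀ x ∈ Icc a b, f x = f a + ∫ t in a..x, f' t) (hh : IntervalIntegrable h volume a b) :
    ∫ t in a..b, f t * h t =
      f b * (∫ t in a..b, h t) - ∫ s in a..b, (∫ t in a..s, h t) * f' s := by
  have hrep : ∀ t ∈ uIcc a b, f t * h t = f b * h t - h t * ∫ s in t..b, f' s := by
    intro t ht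
    rw [← integral_interval_sub_left hf' (hf'.mono_set (uIcc_subset_uIcc_left ht)),
      hf t (uIcc_of_le hab ▸ ht), hf b (right_mem_Icc.2 hab)]
    ring
  have htail : ContinuousOn (fun t => ∫ s in t..b, f' s) (uIcc a b) :=
    continuousOn_primitive_interval_left ((intervalIntegrable_iff').1 hf')
  rw [integral_congr hrep, integral_sub (hh.const_mul _) (hh.mul_continuousOn htail),
    intervalIntegral.integral_const_mul, integral_mul_integral_swap_triangle hab hh hf']

theorem integral_eq_sub_integral_max_mul_deriv {a b c : ℝ} {f f' : ℝ → ℝ} (hab : a ≤ b)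
    (hf' : IntervalIntegrable f' volume a b)
    (hf : ∀ x ∈ Icc a b, f x = f a + ∫ t in a..x, f' t) (hc : c ∈ Icc a b) :
    ∫ t in c..b, f t = f b * (b - c) - ∫ s in a..b, max (s - c) 0 * f' s := by
  have hind : IntervalIntegrable ((Ioi c).indicator 1) volume a b :=
    intervalIntegrable_iff.2 <|
      (intervalIntegrable_iff.1 (intervalIntegrable_const (c := (1 : ℝ)))).indicator
        measurableSet_Ioi
  rw [← integral_indicator_Ioi hc,
    integral_congr (g := fun t => f t * (Ioi c).indicator 1 t) fun t _ => by
      simp [indicator_apply],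
    integral_mul_eq_sub_integral_primitive_mul_deriv hab hf' hf hind,
    integral_indicator_Ioi_one hc.1 hab, max_eq_left (by linarith [hc.2]),
    integral_congr fun s hs => by
      rw [integral_indicator_Ioi_one hc.1 (uIcc_of_le hab ▸ hs).1]]

theorem integral_mul_sub_integral_eq_integral_mul_deriv {a b c : ℝ} {f f' g : ℝ → ℝ}
    (hab : a ≤ b) (hf' : IntervalIntegrable f' volume a b)
    (hf : ∀ x ∈ Icc a b, f x = f a + ∫ t in a..x, f' t) (hg : IntervalIntegrable g volume a b)
    (hgc : ∫ t in a..b, g t = b - c) (hc : c ∈ Icc a b) :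
    (∫ t in a..b, f t * g t) - ∫ t in c..b, f t =
      ∫ s in a..b, (max (s - c) 0 - ∫ t in a..s, g t) * f' s := by
  have hmax : IntervalIntegrable (fun s => max (s - c) 0 * f' s) volume a b :=
    hf'.continuousOn_mul ((continuous_sub_right c).max continuous_const).continuousOn
  have hG : IntervalIntegrable (fun s => (∫ t in a..s, g t) * f' s) volume a b :=
    hf'.continuousOn_mul (continuousOn_primitive_interval ((intervalIntegrable_iff').1 hg))
  simp only [sub_mul]
  rw [integral_sub hmax hG, integral_eq_sub_integral_max_mul_deriv hab hf' hf hc,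
    integral_mul_eq_sub_integral_primitive_mul_deriv hab hf' hf hg, hgc]
  ring

theorem intervalIntegral.integral_mem_Icc_zero_sub {r s : ℝ} {g : ℝ → ℝ} (hrs : r ≤ s)
    (hg : IntervalIntegrable g volume r s) (hg01 : ∀ t ∈ Icc r s, 0 ≤ g t ∧ g t ≤ 1) :
    ∫ t in r..s, g t ∈ Icc 0 (s - r) :=
  ⟨integral_nonneg hrs fun t ht => (hg01 t ht).1, by
    simpa using integral_mono_on hrs hg intervalIntegrable_const fun t ht => (hg01 t ht).2⟩

/-- The function `s ↦ max (s - c) 0 - ∫ t in a..s, g t` vanishes at `a` and `b`, decreases on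
`[a, c]` (as `0 ≤ g`) and increases on `[c, b]` (as `g ≤ 1`), so it takes values in
`[-∫ t in a..c, g t, 0]`. -/
theorem abs_max_sub_integral_le_integral {a b c s : ℝ} {g : ℝ → ℝ} (hab : a ≤ b)
    (hg : IntervalIntegrable g volume a b) (hg01 : ∀ t ∈ Icc a b, 0 ≤ g t ∧ g t ≤ 1)
    (hgc : ∫ t in a..b, g t = b - c) (hc : c ∈ Icc a b) (hs : s ∈ Icc a b) :
    |max (s - c) 0 - ∫ t in a..s, g t| ≤ ∫ t in a..c, g t := by
  have hsub {r u : ℝ} (hr : r ∈ Icc a b) (hu : u ∈ Icc a b) :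
      IntervalIntegrable g volume r u :=
    hg.mono_set (uIcc_subset_uIcc (Icc_subset_uIcc hr) (Icc_subset_uIcc hu))
  have hpiece {r u : ℝ} (hr : r ∈ Icc a b) (hu : u ∈ Icc a b) (hru : r ≤ u) :
      ∫ t in r..u, g t ∈ Icc 0 (u - r) :=
    integral_mem_Icc_zero_sub hru (hsub hr hu) fun t ht =>
      hg01 t ⟨hr.1.trans ht.1, ht.2.trans hu.2⟩
  have hadd {r u : ℝ} (hr : r ∈ Icc a b) (hu : u ∈ Icc a b) :
      (∫ t in a..r, g t) + ∫ t in r..u, g t = ∫ t in a..u, g t :=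
    integral_add_adjacent_intervals (hsub (left_mem_Icc.2 hab) hr) (hsub hr hu)
  have ha := left_mem_Icc.2 hab
  have hb := right_mem_Icc.2 hab
  rw [abs_le]
  rcases le_total s c with hsc | hcs
  · have has := hpiece ha hs hs.1
    have hsc' := hpiece hs hc hsc
    have hasc := hadd hs hc
    rw [max_eq_right (by linarith)]
    constructor <;> linarith [has.1, hsc'.1]
  · have hcs' := hpiece hc hs hcs
    have hsb := hpiece hs hb hs.2
    have hacs := hadd hc hs
    have hasb := hadd hs hb
    rw [max_eq_left (by linarith)]
    constructor <;> linarith [hcs'.2, hsb.2]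

theorem steffensen_L1_two (a b : ℝ) (hab : a < b) (f f' g : ℝ → ℝ)
    (hg : IntervalIntegrable g volume a b)
    (hg01 : ∀ t ∈ Set.Icc a b, 0 ≤ g t ∧ g t ≤ 1)
    (hf' : IntervalIntegrable f' volume a b)
    (hAC : ∀ x ∈ Set.Icc a b, f x = f a + ∫ t in a..x, f' t)
    (lam : ℝ) (hlam : lam = ∫ t in a..b, g t) :
    |(∫ t in a..b, f t * g t) - ∫ t in (b - lam)..b, f t|
      ≤ (∫ t in a..(b - lam), g t) * ∫ x in a..b, |f' x| := by
  set c := b - lam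
  have hgc : ∫ t in a..b, g t = b - c := by rw [← hlam]; ring
  obtain ⟨hlam0, hlam1⟩ := integral_mem_Icc_zero_sub hab.le hg hg01
  have hc : c ∈ Icc a b := ⟨by linarith, by linarith⟩
  rw [integral_mul_sub_integral_eq_integral_mul_deriv hab.le hf' hAC hg hgc hc,
    ← Real.norm_eq_abs, ← intervalIntegral.integral_const_mul]
  refine norm_integral_le_of_norm_le hab.le (ae_of_all _ fun s hs => ?_) (hf'.abs.const_mul _)
  rw [norm_mul, Real.norm_eq_abs, Real.norm_eq_abs]
  exact mul_le_mul_of_nonneg_right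
    (abs_max_sub_integral_le_integral hab.le hg hg01 hgc hc (Ioc_subset_Icc_self hs))
    (abs_nonneg _)
end
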